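/- arXiv:2501.02356 — 4 statements merged into one kernel-verified Lean document; each statement's English description precedes it below -/
import Mathlib

section
/- Let G : Ω → ℝ where Ω = ∏_{i=1}^n Ω_i is a product of finite sets, let P be a product probability distribution on Ω, and fix e ∈ Ω. For S ⊆ {1,…,n}, define E[G|S] = ∑_{ω∈Ω} G(ω) · ∏_{i∈S} δ_i(ω_i) · ∏_{i∉S} P_i(ω_i), where δ_i(ω_i) = 1 if ω_i = e_i and 0 otherwise. Let c_k = ∑_{S : |S|=k} E[G|S]. For z ≥ 0, define the tilted product distribution P^z with marginals P^z_i(ω_i) = (z·δ_i(ω_i) + P_i(ω_i))/(1+z). Then ∑_{k=0}^{n} c_k z^k = (1+z)^n · E_{P^z}[G]. -/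
/-!
Expanding each factor `z δᵢ + Pᵢ` of the tilted weight `(1 + z)ⁿ ∏ᵢ P^z_i` over the subsets `S`
of coordinates that pick `z δᵢ` gives `∑_S z^|S| ∏_{i∈S} δᵢ ∏_{i∉S} Pᵢ`; summing against `G` and
grouping the subsets by cardinality yields `∑_k c_k z^k`.
-/

open Finset

/-- `E[G|S]`: conditional expectation of `G` given that features in `S` take the
reference values `e`. -/
noncomputable def condExp {n : ℕ} {Ω : Fin n → Type*} [∀ i, Fintype (Ω i)]
    [∀ i, DecidableEq (Ω i)] (P : ∀ i, Ω i → ℝ) (e : ∀ i, Ω i)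
    (G : (∀ i, Ω i) → ℝ) (S : Finset (Fin n)) : ℝ :=
  ∑ ω : ∀ i, Ω i, G ω * (∏ i ∈ S, if ω i = e i then (1 : ℝ) else 0) * ∏ i ∈ Sᶜ, P i (ω i)

section

variable {ι : Type*} [Fintype ι]

theorem Finset.sum_range_sum_powersetCard_mul_pow {R : Type*} [CommSemiring R]
    (f : Finset ι → R) (z : R) :
    ∑ k ∈ range (Fintype.card ι + 1), (∑ S ∈ powersetCard k univ, f S) * z ^ k
      = ∑ S, f S * z ^ #S := by
  calc _ = ∑ k ∈ range (Fintype.card ι + 1), ∑ S with #S = k, f S * z ^ #S := by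
        refine sum_congr rfl fun k _ => ?_
        rw [sum_mul]
        exact sum_congr (by ext; simp) fun S hS => by rw [(mem_filter.1 hS).2]
    _ = _ :=
        sum_fiberwise_of_maps_to (fun S _ => mem_range.2 (Nat.lt_succ_of_le (card_le_univ S))) _

theorem Fintype.prod_mul_add [DecidableEq ι] {R : Type*} [CommSemiring R] (z : R) (a b : ι → R) :
    ∏ i, (z * a i + b i) = ∑ S, z ^ #S * ((∏ i ∈ S, a i) * ∏ i ∈ Sᶜ, b i) := by
  rw [Fintype.prod_add]
  refine Finset.sum_congr rfl fun S _ => ?_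
  rw [prod_mul_distrib, prod_const, mul_assoc]

theorem pow_card_mul_prod_div {K : Type*} [Field K] {c : K} (hc : c ≠ 0) (a : ι → K) :
    c ^ Fintype.card ι * ∏ i, a i / c = ∏ i, a i := by
  rw [prod_div_distrib, prod_const, card_univ, mul_div_cancel₀ _ (pow_ne_zero _ hc)]

end

theorem generating_function_lemma_general {n : ℕ} {Ω : Fin n → Type*} [∀ i, Fintype (Ω i)]
    [∀ i, DecidableEq (Ω i)]
    (P : ∀ i, Ω i → ℝ)
    (e : ∀ i, Ω i) (G : (∀ i, Ω i) → ℝ) (z : ℝ) (hz : 0 ≤ z) :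
    ∑ k ∈ Finset.range (n + 1),
        (∑ S ∈ Finset.powersetCard k (Finset.univ : Finset (Fin n)), condExp P e G S) * z ^ k
      = (1 + z) ^ n *
        ∑ ω : ∀ i, Ω i, G ω *
          ∏ i, (z * (if ω i = e i then (1 : ℝ) else 0) + P i (ω i)) / (1 + z) := by
  have h1z : 1 + z ≠ 0 := by positivity
  calc _ = ∑ S, condExp P e G S * z ^ #S := by
        simpa using sum_range_sum_powersetCard_mul_pow (condExp P e G) z
    _ = ∑ ω : ∀ i, Ω i, G ω * ∏ i, (z * (if ω i = e i then (1 : ℝ) else 0) + P i (ω i)) := by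
        simp only [condExp, Fintype.prod_mul_add, sum_mul, mul_sum]
        rw [sum_comm]
        exact sum_congr rfl fun ω _ => sum_congr rfl fun S _ => by ring
    _ = _ := by
        rw [mul_sum]
        refine sum_congr rfl fun ω _ => ?_
        rw [mul_left_comm]
        simpa using (congrArg (G ω * ·) (pow_card_mul_prod_div (ι := Fin n) h1z _)).symm

theorem generating_function_lemma {n : ℕ} {Ω : Fin n → Type*} [∀ i, Fintype (Ω i)]
    [∀ i, Nonempty (Ω i)] [∀ i, DecidableEq (Ω i)]
    (P : ∀ i, Ω i → ℝ) (hP0 : ∀ i x, 0 ≤ P i x) (hP1 : ∀ i, ∑ x, P i x = 1)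
    (e : ∀ i, Ω i) (G : (∀ i, Ω i) → ℝ) (z : ℝ) (hz : 0 ≤ z) :
    ∑ k ∈ Finset.range (n + 1),
        (∑ S ∈ Finset.powersetCard k (Finset.univ : Finset (Fin n)), condExp P e G S) * z ^ k
      = (1 + z) ^ n *
        ∑ ω : ∀ i, Ω i, G ω *
          ∏ i, (z * (if ω i = e i then (1 : ℝ) else 0) + P i (ω i)) / (1 + z) :=
  generating_function_lemma_general P e G z hz
end

section
/- With β_k = k·q_{k-1} − (n−k)·q_k as above and q_0 > 0, the polynomial P_ℓ(z) = ∑_{k=0}^{ℓ} C(ℓ,k) β_k (1+z)^k z^{ℓ−k} has exact degree ℓ for every 0 ≤ ℓ ≤ n−1, with leading coefficient (ℓ−n)·∑_{k=0}^{ℓ} C(ℓ,k) q_k < 0. -/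
open Finset Polynomial

/-- The polynomial `P_ℓ(z) = ∑_{k=0}^{ℓ} C(ℓ,k) β_k (1+z)^k z^{ℓ−k}` where
`β_k = k·q_{k-1} − (n−k)·q_k`. -/
noncomputable def indexPoly (n : ℕ) (q : ℤ → ℝ) (ℓ : ℕ) : Polynomial ℝ :=
  ∑ k ∈ Finset.range (ℓ + 1),
    Polynomial.C ((ℓ.choose k : ℝ) *
        ((k : ℝ) * q ((k : ℤ) - 1) - ((n : ℝ) - (k : ℝ)) * q k)) *
      (1 + Polynomial.X) ^ k * Polynomial.X ^ (ℓ - k)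

lemma onePlusX_pow_coeff (k : ℕ) : ((1 + Polynomial.X : Polynomial ℝ) ^ k).coeff k = 1 := by
  have heq : (1 + Polynomial.X : Polynomial ℝ) = Polynomial.X + Polynomial.C 1 := by
    rw [Polynomial.C_1, add_comm]
  rw [heq]
  have hm : ((Polynomial.X + Polynomial.C (1:ℝ)) ^ k).Monic :=
    (Polynomial.monic_X_add_C 1).pow k
  have hd : ((Polynomial.X + Polynomial.C (1:ℝ)) ^ k).natDegree = k := by
    rw [Polynomial.natDegree_pow, Polynomial.natDegree_X_add_C, mul_one]
  have := hm.coeff_natDegree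
  rwa [hd] at this

lemma key_sum (n ℓ : ℕ) (q : ℤ → ℝ) (hqm : q (-1) = 0) :
    ∑ k ∈ Finset.range (ℓ + 1),
      (ℓ.choose k : ℝ) * ((k : ℝ) * q ((k : ℤ) - 1) - ((n : ℝ) - (k : ℝ)) * q k)
    = ((ℓ : ℝ) - (n : ℝ)) * ∑ k ∈ Finset.range (ℓ + 1), (ℓ.choose k : ℝ) * q k := by
  have h1 : ∑ k ∈ Finset.range (ℓ + 1), (ℓ.choose k : ℝ) * ((k : ℝ) * q ((k : ℤ) - 1))
      = ∑ k ∈ Finset.range (ℓ + 1), (((ℓ : ℝ) - (k : ℝ)) * (ℓ.choose k : ℝ)) * q k := by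
    rw [Finset.sum_range_succ' (fun k => (ℓ.choose k : ℝ) * ((k : ℝ) * q ((k : ℤ) - 1)))]
    rw [Finset.sum_range_succ (fun k => (((ℓ : ℝ) - (k : ℝ)) * (ℓ.choose k : ℝ)) * q k)]
    have hz1 : (ℓ.choose 0 : ℝ) * (((0:ℕ) : ℝ) * q (((0:ℕ) : ℤ) - 1)) = 0 := by simp
    have hz2 : (((ℓ : ℝ) - ((ℓ:ℕ) : ℝ)) * (ℓ.choose ℓ : ℝ)) * q ℓ = 0 := by simp
    rw [hz1, hz2, add_zero, add_zero]
    apply Finset.sum_congr rfl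
    intro j hj
    have hjl : j < ℓ := Finset.mem_range.mp hj
    have hch : (ℓ.choose (j + 1) * (j + 1) : ℕ) = ℓ.choose j * (ℓ - j) :=
      Nat.choose_succ_right_eq ℓ j
    have hcast : (ℓ.choose (j + 1) : ℝ) * ((j : ℝ) + 1) = (ℓ.choose j : ℝ) * ((ℓ : ℝ) - j) := by
      have := congrArg (fun m : ℕ => (m : ℝ)) hch
      push_cast [Nat.cast_sub hjl.le] at this
      linarith [this]
    have hq : ((((j:ℕ) + 1 : ℕ) : ℤ) - 1) = (j : ℤ) := by push_cast; ring
    show (ℓ.choose (j+1) : ℝ) * ((((j:ℕ)+1:ℕ) : ℝ) * q ((((j:ℕ)+1:ℕ) : ℤ) - 1))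
        = (((ℓ : ℝ) - (j : ℝ)) * (ℓ.choose j : ℝ)) * q j
    rw [hq]
    push_cast
    calc (ℓ.choose (j+1) : ℝ) * (((j:ℝ)+1) * q j)
        = ((ℓ.choose (j+1) : ℝ) * ((j:ℝ)+1)) * q j := by ring
      _ = ((ℓ.choose j : ℝ) * ((ℓ : ℝ) - j)) * q j := by rw [hcast]
      _ = (((ℓ : ℝ) - (j : ℝ)) * (ℓ.choose j : ℝ)) * q j := by ring
  have expand : ∑ k ∈ Finset.range (ℓ + 1),
      (ℓ.choose k : ℝ) * ((k : ℝ) * q ((k : ℤ) - 1) - ((n : ℝ) - (k : ℝ)) * q k)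
      = (∑ k ∈ Finset.range (ℓ + 1), (ℓ.choose k : ℝ) * ((k : ℝ) * q ((k : ℤ) - 1)))
        - ∑ k ∈ Finset.range (ℓ + 1), (((n : ℝ) - (k : ℝ)) * (ℓ.choose k : ℝ)) * q k := by
    rw [← Finset.sum_sub_distrib]
    exact Finset.sum_congr rfl (fun k _ => by ring)
  rw [expand, h1, ← Finset.sum_sub_distrib, Finset.mul_sum]
  exact Finset.sum_congr rfl (fun k _ => by ring)

theorem indexPoly_degree_eq {n : ℕ} (hn : 1 ≤ n) (q : ℤ → ℝ)
    (hqnonneg : ∀ k : ℤ, 0 ≤ k → k ≤ (n : ℤ) - 1 → 0 ≤ q k)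
    (hq0 : 0 < q 0) (hqm : q (-1) = 0) (hqn : q n = 0) :
    ∀ ℓ < n,
      (indexPoly n q ℓ).degree = (ℓ : ℕ) ∧
      (indexPoly n q ℓ).leadingCoeff
          = ((ℓ : ℝ) - (n : ℝ)) * ∑ k ∈ Finset.range (ℓ + 1), (ℓ.choose k : ℝ) * q k ∧
      (indexPoly n q ℓ).leadingCoeff < 0 := by
  intro ℓ hℓ
  set L : ℝ := ((ℓ : ℝ) - (n : ℝ)) * ∑ k ∈ Finset.range (ℓ + 1), (ℓ.choose k : ℝ) * q k with hL
  have hsum_pos : 0 < ∑ k ∈ Finset.range (ℓ + 1), (ℓ.choose k : ℝ) * q k := by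
    apply Finset.sum_pos'
    · intro k hk
      have hk' : k ≤ ℓ := Nat.lt_succ_iff.mp (Finset.mem_range.mp hk)
      have : (0 : ℝ) ≤ q k := by
        apply hqnonneg
        · exact_mod_cast Nat.zero_le k
        · omega
      positivity
    · refine ⟨0, Finset.mem_range.mpr (Nat.succ_pos ℓ), ?_⟩
      simpa using hq0
  have hLneg : L < 0 := by
    apply mul_neg_of_neg_of_pos _ hsum_pos
    have : (ℓ : ℝ) < n := by exact_mod_cast hℓ
    linarith
  have hLne : L ≠ 0 := ne_of_lt hLneg
  have hcoeff : (indexPoly n q ℓ).coeff ℓ = L := by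
    rw [indexPoly, Polynomial.finset_sum_coeff]
    have hterm : ∀ k ∈ Finset.range (ℓ + 1),
        (Polynomial.C ((ℓ.choose k : ℝ) *
            ((k : ℝ) * q ((k : ℤ) - 1) - ((n : ℝ) - (k : ℝ)) * q k)) *
          (1 + Polynomial.X) ^ k * Polynomial.X ^ (ℓ - k)).coeff ℓ
        = (ℓ.choose k : ℝ) * ((k : ℝ) * q ((k : ℤ) - 1) - ((n : ℝ) - (k : ℝ)) * q k) := by
      intro k hk
      have hk' : k ≤ ℓ := Nat.lt_succ_iff.mp (Finset.mem_range.mp hk)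
      have hif : ℓ - k ≤ ℓ := Nat.sub_le ℓ k
      rw [Polynomial.coeff_mul_X_pow', if_pos hif]
      have h2 : ℓ - (ℓ - k) = k := by omega
      rw [h2, Polynomial.coeff_C_mul, onePlusX_pow_coeff, mul_one]
    rw [Finset.sum_congr rfl hterm, key_sum n ℓ q hqm]
  have hdegle : (indexPoly n q ℓ).degree ≤ (ℓ : ℕ) := by
    rw [indexPoly]
    refine le_trans (Polynomial.degree_sum_le _ _) ?_
    apply Finset.sup_le
    intro k hk
    have hk' : k ≤ ℓ := Nat.lt_succ_iff.mp (Finset.mem_range.mp hk)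
    have hnd : (Polynomial.C ((ℓ.choose k : ℝ) *
            ((k : ℝ) * q ((k : ℤ) - 1) - ((n : ℝ) - (k : ℝ)) * q k)) *
          (1 + Polynomial.X) ^ k * Polynomial.X ^ (ℓ - k)).natDegree ≤ ℓ := by
      refine le_trans (Polynomial.natDegree_mul_le) ?_
      have h1 : (Polynomial.C ((ℓ.choose k : ℝ) *
            ((k : ℝ) * q ((k : ℤ) - 1) - ((n : ℝ) - (k : ℝ)) * q k)) *
          (1 + Polynomial.X) ^ k).natDegree ≤ k := by
        refine le_trans (Polynomial.natDegree_mul_le) ?_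
        simp only [Polynomial.natDegree_C, zero_add]
        refine le_trans (Polynomial.natDegree_pow_le) ?_
        have honep : (1 + Polynomial.X : Polynomial ℝ).natDegree ≤ 1 := by
          rw [add_comm, ← Polynomial.C_1]
          exact (Polynomial.natDegree_X_add_C (1:ℝ)).le
        calc k * (1 + Polynomial.X : Polynomial ℝ).natDegree ≤ k * 1 :=
              Nat.mul_le_mul_left k honep
          _ = k := Nat.mul_one k
      have h2 : (Polynomial.X ^ (ℓ - k) : Polynomial ℝ).natDegree ≤ ℓ - k := by
        simp [Polynomial.natDegree_X_pow]
      omega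
    refine le_trans (Polynomial.degree_le_natDegree) ?_
    exact_mod_cast hnd
  have hdegge : ((ℓ : ℕ) : WithBot ℕ) ≤ (indexPoly n q ℓ).degree := by
    apply Polynomial.le_degree_of_ne_zero
    rw [hcoeff]; exact hLne
  have hdeg : (indexPoly n q ℓ).degree = (ℓ : ℕ) := le_antisymm hdegle hdegge
  have hnatdeg : (indexPoly n q ℓ).natDegree = ℓ :=
    Polynomial.natDegree_eq_of_degree_eq_some hdeg
  have hlead : (indexPoly n q ℓ).leadingCoeff = L := by
    rw [Polynomial.leadingCoeff, hnatdeg, hcoeff]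
  exact ⟨hdeg, by rw [hlead], by rw [hlead]; exact hLneg⟩
end

section
/- For the Shapley weights q_k = k!(n−k−1)!/n! (0 ≤ k ≤ n−1), with β_k = k·q_{k-1} − (n−k)·q_k and q_{-1} = q_n = 0, the polynomial P_ℓ(z) = ∑_{k=0}^{ℓ} C(ℓ,k) β_k (1+z)^k z^{ℓ−k} equals −z^ℓ for every 0 ≤ ℓ ≤ n−1. -/
open Finset Polynomial

/-!
For the Shapley weights the coefficient `β_0 = -n·q_0` is `-1`, while for `0 < k < n` both terms of
`β_k` equal `k!(n-k)!/n!`, so `β_k = 0`. Hence only the `k = 0` summand of `P_ℓ` survives.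
-/

open Nat

/-- The coefficient `β_k` of `indexPoly`. -/
def indexCoeff (n : ℕ) (q : ℤ → ℝ) (k : ℕ) : ℝ :=
  (k : ℝ) * q ((k : ℤ) - 1) - ((n : ℝ) - (k : ℝ)) * q k

theorem indexPoly_eq_neg_X_pow {n : ℕ} {q : ℤ → ℝ} {ℓ : ℕ} (h₀ : indexCoeff n q 0 = -1)
    (h : ∀ k, 0 < k → k ≤ ℓ → indexCoeff n q k = 0) :
    indexPoly n q ℓ = -(X ^ ℓ) := by
  unfold indexPoly
  rw [Finset.sum_eq_single 0]
  · change C (_ * indexCoeff n q 0) * _ * _ = _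
    simp [h₀]
  · intro k hk hk₀
    change C (_ * indexCoeff n q k) * _ * _ = 0
    rw [h k (Nat.pos_of_ne_zero hk₀) (Nat.lt_succ_iff.mp (mem_range.mp hk))]
    simp
  · simp

section Shapley

variable {n : ℕ} {q : ℤ → ℝ}
  (hq : ∀ k : ℕ, k < n → q k = (k ! : ℝ) * ((n - k - 1)! : ℝ) / (n ! : ℝ))
include hq

theorem indexCoeff_zero_of_shapley (hn : 0 < n) : indexCoeff n q 0 = -1 := by
  obtain ⟨m, rfl⟩ : ∃ m, n = m + 1 := ⟨n - 1, by omega⟩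
  have hq₀ : q 0 = m ! / (m + 1)! := by simpa using hq 0 hn
  simp only [indexCoeff, Nat.cast_zero, hq₀, factorial_succ]
  push_cast
  field_simp
  ring

theorem indexCoeff_eq_zero_of_shapley {k : ℕ} (hk : 0 < k) (hkn : k < n) :
    indexCoeff n q k = 0 := by
  obtain ⟨a, b, rfl, rfl⟩ : ∃ a b, k = a + 1 ∧ n = a + b + 2 :=
    ⟨k - 1, n - k - 1, by omega, by omega⟩
  have hprev := hq a (by omega)
  have hcur := hq (a + 1) hkn
  rw [show a + b + 2 - a - 1 = b + 1 by omega] at hprev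
  rw [show a + b + 2 - (a + 1) - 1 = b by omega] at hcur
  simp only [indexCoeff, show ((a + 1 : ℕ) : ℤ) - 1 = (a : ℤ) by push_cast; ring, hprev, hcur]
  rw [factorial_succ a, factorial_succ b]
  push_cast
  ring

end Shapley

theorem indexPoly_shapley_general {n : ℕ} (q : ℤ → ℝ)
    (hq : ∀ k : ℕ, k < n →
      q k = (k.factorial : ℝ) * ((n - k - 1).factorial : ℝ) / (n.factorial : ℝ)) :
    ∀ ℓ < n, indexPoly n q ℓ = -(Polynomial.X ^ ℓ) := fun ℓ hℓ =>
  indexPoly_eq_neg_X_pow (indexCoeff_zero_of_shapley hq (by omega))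
    fun _ hk _ => indexCoeff_eq_zero_of_shapley hq hk (by omega)

/-- For the Shapley weights `q_k = k!(n−k−1)!/n!` the polynomial `P_ℓ` equals `−z^ℓ`. -/
theorem indexPoly_shapley {n : ℕ} (hn : 1 ≤ n) (q : ℤ → ℝ)
    (hq : ∀ k : ℕ, k < n →
      q k = (k.factorial : ℝ) * ((n - k - 1).factorial : ℝ) / (n.factorial : ℝ))
    (hqm : q (-1) = 0) (hqn : q n = 0) :
    ∀ ℓ < n, indexPoly n q ℓ = -(Polynomial.X ^ ℓ) :=
  indexPoly_shapley_general q hq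
end

section
/- For the binomial weights q_k = θ^k(1−θ)^{n−1−k} with θ ∈ (0,1), with β_k = k·q_{k-1} − (n−k)·q_k and q_{-1} = q_n = 0, the polynomial P_ℓ(z) = ∑_{k=0}^{ℓ} C(ℓ,k) β_k (1+z)^k z^{ℓ−k} equals (1−θ)^{n−ℓ−1}·(ℓ(z+1)(z+θ)^{ℓ−1} − n(z+θ)^ℓ) for every 1 ≤ ℓ ≤ n−1. -/
open Finset Polynomial

lemma binom_aux (m : ℕ) (a b : ℝ) :
    ∑ k ∈ Finset.range (m + 1), (m.choose k : ℝ) * (a ^ k * b ^ (m - k)) = (a + b) ^ m := by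
  rw [add_pow]
  exact Finset.sum_congr rfl fun k _ => by ring

/-- For the binomial weights `q_k = θ^k (1−θ)^{n−1−k}` with `θ ∈ (0,1)`,
`P_ℓ` has the stated closed form for `1 ≤ ℓ ≤ n−1`. -/
theorem indexPoly_binomial {n : ℕ} (hn : 1 ≤ n) (θ : ℝ) (hθ : θ ∈ Set.Ioo (0 : ℝ) 1)
    (q : ℤ → ℝ) (hq : ∀ k : ℕ, k < n → q k = θ ^ k * (1 - θ) ^ (n - 1 - k))
    (hqm : q (-1) = 0) (hqn : q n = 0) :
    ∀ ℓ, 1 ≤ ℓ → ℓ < n →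
      indexPoly n q ℓ
        = Polynomial.C ((1 - θ) ^ (n - ℓ - 1)) *
            (Polynomial.C (ℓ : ℝ) * (Polynomial.X + 1) *
                (Polynomial.X + Polynomial.C θ) ^ (ℓ - 1) -
              Polynomial.C (n : ℝ) * (Polynomial.X + Polynomial.C θ) ^ ℓ) := by
  intro ℓ hℓ1 hℓn
  obtain ⟨m, rfl⟩ : ∃ m, ℓ = m + 1 := ⟨ℓ - 1, by omega⟩
  obtain ⟨t, rfl⟩ : ∃ t, n = m + 1 + t + 1 := ⟨n - m - 2, by omega⟩
  apply Polynomial.funext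
  intro z
  rw [indexPoly]
  simp only [eval_finset_sum, eval_mul, eval_pow, eval_add, eval_sub, eval_one, eval_C,
    eval_X]
  -- split the sum into two pieces
  have hsplit :
      ∑ k ∈ Finset.range (m + 1 + 1),
        ((m + 1).choose k : ℝ) *
            ((k : ℝ) * q ((k : ℤ) - 1) - (((m + 1 + t + 1 : ℕ) : ℝ) - (k : ℝ)) * q k) *
          (1 + z) ^ k * z ^ (m + 1 - k)
      = (∑ k ∈ Finset.range (m + 1 + 1),
          ((m + 1).choose k : ℝ) * (k : ℝ) * θ ^ (k - 1) * (1 - θ) ^ (m + 1 - k + t) *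
            (1 + z) ^ k * z ^ (m + 1 - k))
        - (∑ k ∈ Finset.range (m + 1 + 1),
          ((m + 1 + t + 1 : ℕ) : ℝ) * ((m + 1).choose k : ℝ) *
            ((θ * (1 + z)) ^ k * ((1 - θ) * z) ^ (m + 1 - k)) * (1 - θ) ^ t) := by
    rw [← Finset.sum_sub_distrib]
    refine Finset.sum_congr rfl fun k hk => ?_
    have hk' : k ≤ m + 1 := by simpa [Nat.lt_succ_iff] using hk
    match k with
    | 0 =>
      rw [show ((0 : ℕ) : ℤ) - 1 = (-1 : ℤ) by norm_num, hqm,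
        hq 0 (by omega)]
      have e0 : m + 1 + t + 1 - 1 - 0 = m + 1 + t := by omega
      have e0' : m + 1 - 0 + t = m + 1 + t := by omega
      have e0'' : m + 1 - 0 = m + 1 := by omega
      rw [e0, e0', e0'']
      have p2 : (1 - θ) ^ (m + 1 + t) = (1 - θ) ^ (m + 1) * (1 - θ) ^ t := pow_add _ _ _
      have p5 : ((1 - θ) * z) ^ (m + 1) = (1 - θ) ^ (m + 1) * z ^ (m + 1) := mul_pow _ _ _
      rw [p2, p5]
      push_cast
      ring
    | j + 1 =>
      have hj : j ≤ m := by omega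
      rw [show ((j + 1 : ℕ) : ℤ) - 1 = ((j : ℕ) : ℤ) by push_cast; ring,
        hq j (by omega), hq (j + 1) (by omega)]
      have e1 : m + 1 + t + 1 - 1 - j = (m - j + t) + 1 := by omega
      have e2 : m + 1 + t + 1 - 1 - (j + 1) = m - j + t := by omega
      have e3 : m + 1 - (j + 1) = m - j := by omega
      have e5 : j + 1 - 1 = j := by omega
      rw [e1, e2, e3, e5]
      have p1 : (1 - θ) ^ (m - j + t + 1) = (1 - θ) ^ (m - j) * (1 - θ) ^ t * (1 - θ) := by
        rw [pow_succ, pow_add]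
      have p2 : (1 - θ) ^ (m - j + t) = (1 - θ) ^ (m - j) * (1 - θ) ^ t := pow_add _ _ _
      have p3 : θ ^ (j + 1) = θ ^ j * θ := pow_succ _ _
      have p4 : (θ * (1 + z)) ^ (j + 1) = θ ^ j * θ * (1 + z) ^ (j + 1) := by
        rw [mul_pow, p3]
      have p5 : ((1 - θ) * z) ^ (m - j) = (1 - θ) ^ (m - j) * z ^ (m - j) := mul_pow _ _ _
      rw [p1, p2, p3, p4, p5]
      push_cast
      ring
  rw [hsplit]
  -- second sum
  have hB : (∑ k ∈ Finset.range (m + 1 + 1),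
        ((m + 1 + t + 1 : ℕ) : ℝ) * ((m + 1).choose k : ℝ) *
          ((θ * (1 + z)) ^ k * ((1 - θ) * z) ^ (m + 1 - k)) * (1 - θ) ^ t)
      = ((m + 1 + t + 1 : ℕ) : ℝ) * (1 - θ) ^ t * (z + θ) ^ (m + 1) := by
    have : (∑ k ∈ Finset.range (m + 1 + 1),
        ((m + 1 + t + 1 : ℕ) : ℝ) * ((m + 1).choose k : ℝ) *
          ((θ * (1 + z)) ^ k * ((1 - θ) * z) ^ (m + 1 - k)) * (1 - θ) ^ t)
        = ((m + 1 + t + 1 : ℕ) : ℝ) * (1 - θ) ^ t *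
          ∑ k ∈ Finset.range (m + 1 + 1),
            ((m + 1).choose k : ℝ) * ((θ * (1 + z)) ^ k * ((1 - θ) * z) ^ (m + 1 - k)) := by
      rw [Finset.mul_sum]
      exact Finset.sum_congr rfl fun k _ => by ring
    rw [this, binom_aux]
    have : θ * (1 + z) + (1 - θ) * z = z + θ := by ring
    rw [this]
  rw [hB]
  -- first sum
  have hA : (∑ k ∈ Finset.range (m + 1 + 1),
        ((m + 1).choose k : ℝ) * (k : ℝ) * θ ^ (k - 1) * (1 - θ) ^ (m + 1 - k + t) *
          (1 + z) ^ k * z ^ (m + 1 - k))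
      = ((m + 1 : ℕ) : ℝ) * (1 + z) * (1 - θ) ^ t * (z + θ) ^ m := by
    rw [Finset.sum_range_succ']
    have h0 : ((m + 1).choose 0 : ℝ) * ((0 : ℕ) : ℝ) * θ ^ (0 - 1) *
        (1 - θ) ^ (m + 1 - 0 + t) * (1 + z) ^ 0 * z ^ (m + 1 - 0) = 0 := by
      simp
    rw [h0, add_zero]
    have hterm : ∀ j ∈ Finset.range (m + 1),
        ((m + 1).choose (j + 1) : ℝ) * ((j + 1 : ℕ) : ℝ) * θ ^ (j + 1 - 1) *
            (1 - θ) ^ (m + 1 - (j + 1) + t) * (1 + z) ^ (j + 1) * z ^ (m + 1 - (j + 1))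
          = ((m + 1 : ℕ) : ℝ) * (1 + z) * (1 - θ) ^ t *
            ((m.choose j : ℝ) * ((θ * (1 + z)) ^ j * ((1 - θ) * z) ^ (m - j))) := by
      intro j hj
      have hj' : j ≤ m := by simpa [Nat.lt_succ_iff] using hj
      have hc : ((m + 1).choose (j + 1) : ℝ) * ((j + 1 : ℕ) : ℝ)
          = ((m + 1 : ℕ) : ℝ) * (m.choose j : ℝ) := by
        have := Nat.add_one_mul_choose_eq m j
        have : ((m + 1) * m.choose j : ℕ) = ((m + 1).choose (j + 1) * (j + 1) : ℕ) := this
        exact_mod_cast (congrArg (Nat.cast : ℕ → ℝ) this).symm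
      have e1 : j + 1 - 1 = j := by omega
      have e2 : m + 1 - (j + 1) + t = m - j + t := by omega
      have e3 : m + 1 - (j + 1) = m - j := by omega
      rw [e1, e2, e3]
      have p2 : (1 - θ) ^ (m - j + t) = (1 - θ) ^ (m - j) * (1 - θ) ^ t := pow_add _ _ _
      have p4 : (θ * (1 + z)) ^ j = θ ^ j * (1 + z) ^ j := mul_pow _ _ _
      have p5 : ((1 - θ) * z) ^ (m - j) = (1 - θ) ^ (m - j) * z ^ (m - j) := mul_pow _ _ _
      rw [p2, p4, p5]
      have p6 : (1 + z) ^ (j + 1) = (1 + z) ^ j * (1 + z) := pow_succ _ _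
      rw [p6]
      calc ((m + 1).choose (j + 1) : ℝ) * ((j + 1 : ℕ) : ℝ) * θ ^ j *
            ((1 - θ) ^ (m - j) * (1 - θ) ^ t) * ((1 + z) ^ j * (1 + z)) * z ^ (m - j)
          = ((m + 1).choose (j + 1) : ℝ) * ((j + 1 : ℕ) : ℝ) *
            (θ ^ j * ((1 - θ) ^ (m - j) * (1 - θ) ^ t) * ((1 + z) ^ j * (1 + z)) * z ^ (m - j)) := by
            ring
        _ = ((m + 1 : ℕ) : ℝ) * (m.choose j : ℝ) *
            (θ ^ j * ((1 - θ) ^ (m - j) * (1 - θ) ^ t) * ((1 + z) ^ j * (1 + z)) * z ^ (m - j)) := by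
            rw [hc]
        _ = _ := by ring
    rw [Finset.sum_congr rfl hterm, ← Finset.mul_sum, binom_aux]
    have : θ * (1 + z) + (1 - θ) * z = z + θ := by ring
    rw [this]
  rw [hA]
  have et : m + 1 + t + 1 - (m + 1) - 1 = t := by omega
  have em : m + 1 - 1 = m := by omega
  rw [et, em]
  push_cast
  ring
end
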